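/- arXiv:1311.4348 — 2 statements merged into one kernel-verified Lean document; each statement's English description precedes it below -/
import Mathlib

section
/- If m > (n^3+n+2)/2 and τ(1), ..., τ(m) are m distinct partitions of n, then there exist rational numbers α_1,...,α_m, not all zero, such that for every non-negative integer y, the polynomial ∑_{i=1}^m α_i · c(τ(i), y) is the zero polynomial in ℚ[q]. -/
/-!
Write `c_s(y)` for `c(τ, y)` when `s` is the multiset of parts of `τ`.

`c_s(y)` is palindromic of degree `n y`, so it is determined by its `⌊n y / 2⌋ + 1` lowest
coefficients. Hence the vectors `(c_{τ(i)}(y))_{0 ≤ y ≤ n}` lie in a `ℚ`-space of dimension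
`∑_{y ≤ n} (⌊n y / 2⌋ + 1) ≤ (n³ + n + 2) / 2 < m`, and admit a nontrivial relation `α`.

Multiplying `c_s(y)` by `∏_{p ∈ s} (q^p - 1)` gives `∏_{p ∈ s} (q^{p (y + 1)} - 1)`, a
`ℚ[q]`-combination of the geometric sequences `(q^k)^y` with `k ≤ n`. So `y ↦ c_s(y)`, and with
it `y ↦ ∑ α_i c_{τ(i)}(y)`, solves the order `n + 1` recurrence over `ℚ[q]` with characteristic
polynomial `∏_{k ≤ n} (T - q^k)`; vanishing at `y = 0, …, n`, the latter vanishes for all `y`.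
-/

open Polynomial Finset

namespace LinearRecurrence

variable {R : Type*} [CommRing R]

noncomputable def ofCharPoly (p : R[X]) : LinearRecurrence R :=
  ⟨p.natDegree, fun i => -p.coeff i⟩

theorem charPoly_ofCharPoly {p : R[X]} (hp : p.Monic) : (ofCharPoly p).charPoly = p := by
  conv_rhs => rw [hp.as_sum]
  simp only [charPoly, ofCharPoly, ← C_mul_X_pow_eq_monomial, map_one, one_mul, map_neg,
    sum_neg_distrib, sub_neg_eq_add]
  exact congrArg _ (Fin.sum_univ_eq_sum_range (fun i => C (p.coeff i) * X ^ i) _)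

theorem IsSolution.of_mul_left [IsDomain R] {E : LinearRecurrence R} {u : ℕ → R} {b : R}
    (hb : b ≠ 0) (h : E.IsSolution fun y => b * u y) : E.IsSolution u := fun y =>
  mul_left_cancel₀ hb <| by
    simp only [h y, mul_sum]
    exact sum_congr rfl fun _ _ => mul_left_comm _ _ _

theorem IsSolution.eq_zero {E : LinearRecurrence R} {u : ℕ → R} (h : E.IsSolution u)
    (hinit : ∀ y < E.order, u y = 0) : u = 0 :=
  (E.eq_iff_eqOn_range_order u 0 h E.solSpace.zero_mem).2 fun y hy => hinit y (mem_range.1 hy)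

end LinearRecurrence

theorem Multiset.prod_map_pow_sub_one {R : Type*} [CommRing R] (s : Multiset ℕ) (x : R) :
    (s.map fun p => x ^ p - 1).prod =
      (s.antidiagonal.map fun uv => (-1) ^ Multiset.card uv.2 * x ^ uv.1.sum).sum := by
  simp only [sub_eq_add_neg, prod_map_add]
  refine congrArg _ (map_congr rfl fun uv _ => ?_)
  have hpow (u : Multiset ℕ) : (u.map fun p => x ^ p).prod = x ^ u.sum := by
    induction u using Multiset.induction_on <;> simp [pow_add, *]
  rw [hpow, map_const', prod_replicate, mul_comm]

namespace Polynomial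

variable {R : Type*} [Semiring R]

theorem reflect_sum {ι : Type*} (N : ℕ) (s : Finset ι) (f : ι → R[X]) :
    reflect N (∑ i ∈ s, f i) = ∑ i ∈ s, reflect N (f i) := by
  classical
  induction s using Finset.induction_on with
  | empty => simp
  | insert _ _ ha ih => rw [sum_insert ha, sum_insert ha, reflect_add, ih]

variable (R) in
def palindromic (d : ℕ) : Submodule R R[X] where
  carrier := {p | p.natDegree ≤ d ∧ reflect d p = p}
  zero_mem' := by simp
  add_mem' hp hq := ⟨natDegree_add_le_of_degree_le hp.1 hq.1, by rw [reflect_add, hp.2, hq.2]⟩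
  smul_mem' r p hp := ⟨(natDegree_smul_le r p).trans hp.1, by
    rw [smul_eq_C_mul, reflect_C_mul, hp.2]⟩

theorem mem_palindromic {d : ℕ} {p : R[X]} :
    p ∈ palindromic R d ↔ p.natDegree ≤ d ∧ reflect d p = p :=
  Iff.rfl

theorem mul_mem_palindromic {d e : ℕ} {p q : R[X]} (hp : p ∈ palindromic R d)
    (hq : q ∈ palindromic R e) : p * q ∈ palindromic R (d + e) :=
  ⟨natDegree_mul_le.trans (add_le_add hp.1 hq.1), by rw [reflect_mul _ _ hp.1 hq.1, hp.2, hq.2]⟩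

theorem sum_range_X_pow_mul_mem_palindromic (p y : ℕ) :
    ∑ j ∈ range (y + 1), (X : R[X]) ^ (p * j) ∈ palindromic R (p * y) := by
  refine ⟨natDegree_sum_le_of_forall_le _ _ fun j hj => ?_, ?_⟩
  · exact (natDegree_X_pow_le _).trans (Nat.mul_le_mul_left p (Nat.lt_succ_iff.1 (mem_range.1 hj)))
  · rw [reflect_sum, ← sum_range_reflect]
    refine sum_congr rfl fun j hj => ?_
    have hj : j ≤ y := Nat.lt_succ_iff.1 (mem_range.1 hj)
    rw [reflect_monomial, Nat.add_sub_cancel, revAt_le (Nat.mul_le_mul_left p (Nat.sub_le _ _)),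
      ← Nat.mul_sub, Nat.sub_sub_self hj]

theorem eq_zero_of_mem_palindromic {d : ℕ} {p : R[X]} (hp : p ∈ palindromic R d)
    (hlow : ∀ b ≤ d / 2, p.coeff b = 0) : p = 0 := by
  ext b
  rw [coeff_zero]
  rcases le_or_gt b d with hbd | hbd
  · rcases le_or_gt b (d / 2) with hb | hb
    · exact hlow b hb
    · rw [← hp.2, coeff_reflect, revAt_le hbd]
      exact hlow _ (by omega)
  · exact coeff_eq_zero_of_natDegree_lt (hp.1.trans_lt hbd)

end Polynomial

open LinearRecurrence

section GeomSumProd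

variable (K : Type*) [Field K]

noncomputable def geomSumProd (s : Multiset ℕ) (y : ℕ) : K[X] :=
  (s.map fun p => ∑ j ∈ range (y + 1), (X : K[X]) ^ (p * j)).prod

theorem geomSumProd_mem_palindromic (s : Multiset ℕ) (y : ℕ) :
    geomSumProd K s y ∈ palindromic K (s.sum * y) := by
  induction s using Multiset.induction_on with
  | empty => simp [geomSumProd, mem_palindromic]
  | cons p s ih =>
    rw [geomSumProd, Multiset.map_cons, Multiset.prod_cons, Multiset.sum_cons, add_mul]
    exact mul_mem_palindromic (sum_range_X_pow_mul_mem_palindromic p y) ih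

theorem exists_ne_zero_forall_le_sum_smul_geomSumProd_eq_zero {ι : Type*} [Fintype ι]
    (s : ι → Multiset ℕ) (n : ℕ) (hs : ∀ i, (s i).sum = n)
    (hcard : ∑ y ∈ range (n + 1), (n * y / 2 + 1) < Fintype.card ι) :
    ∃ α : ι → K, α ≠ 0 ∧ ∀ y ≤ n, ∑ i, α i • geomSumProd K (s i) y = 0 := by
  let v : ι → (Σ y : Fin (n + 1), Fin (n * y / 2 + 1)) → K :=
    fun i z => (geomSumProd K (s i) z.1).coeff z.2
  have hdep : ¬ LinearIndependent K v := fun h => by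
    have := h.fintype_card_le_finrank
    simp only [Module.finrank_fintype_fun_eq_card, Fintype.card_sigma, Fintype.card_fin,
      Fin.sum_univ_eq_sum_range (fun y => n * y / 2 + 1)] at this
    omega
  obtain ⟨α, hα, i, hi⟩ := Fintype.not_linearIndependent_iff.1 hdep
  refine ⟨α, fun h => hi (congrFun h i), fun y hy => eq_zero_of_mem_palindromic (d := n * y)
    (Submodule.sum_mem _ fun i _ => Submodule.smul_mem _ _ ?_) fun b hb => ?_⟩
  · simpa only [hs] using geomSumProd_mem_palindromic K (s i) y
  · simpa [v, finsetSum_coeff] using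
      congrFun hα ⟨⟨y, Nat.lt_succ_of_le hy⟩, ⟨b, Nat.lt_succ_of_le hb⟩⟩

noncomputable def powRecurrence (n : ℕ) : LinearRecurrence K[X] :=
  ofCharPoly (∏ a ∈ range (n + 1), (X - C ((X : K[X]) ^ a)))

theorem powRecurrence_order (n : ℕ) : (powRecurrence K n).order = n + 1 := by
  simp only [powRecurrence, ofCharPoly, natDegree_finsetProd_X_sub_C_eq_card, card_range]

variable {K}

theorem isSolution_powRecurrence_pow {n k : ℕ} (hk : k ≤ n) :
    (powRecurrence K n).IsSolution fun y => ((X : K[X]) ^ k) ^ y := by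
  rw [geom_sol_iff_root_charPoly, powRecurrence,
    charPoly_ofCharPoly (monic_prod_of_monic _ _ fun a _ => monic_X_sub_C _), IsRoot, eval_prod]
  exact prod_eq_zero (mem_range.2 (Nat.lt_succ_of_le hk)) (by simp)

theorem isSolution_powRecurrence_prod_pow_sub_one {n : ℕ} {s : Multiset ℕ} (hs : s.sum ≤ n) :
    (powRecurrence K n).IsSolution
      fun y => (s.map fun p => (X : K[X]) ^ (p * (y + 1)) - 1).prod := by
  have hexpand : (fun y => (s.map fun p => (X : K[X]) ^ (p * (y + 1)) - 1).prod) =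
      (s.antidiagonal.map fun uv => ((-1 : K[X]) ^ Multiset.card uv.2 * X ^ uv.1.sum) •
        fun y => ((X : K[X]) ^ uv.1.sum) ^ y).sum := by
    ext1 y
    simp only [Pi.multiset_sum_apply, Multiset.map_map, Function.comp_def, Pi.smul_apply,
      smul_eq_mul, mul_comm _ (y + 1), pow_mul, Multiset.prod_map_pow_sub_one]
    exact congrArg _ (Multiset.map_congr rfl fun uv _ => by ring)
  rw [hexpand, is_sol_iff_mem_solSpace]
  refine multiset_sum_mem _ fun u hu => ?_
  obtain ⟨uv, huv, rfl⟩ := Multiset.mem_map.1 hu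
  have hle : uv.1.sum ≤ n := by
    rw [← Multiset.mem_antidiagonal.1 huv, Multiset.sum_add] at hs
    omega
  exact Submodule.smul_mem _ _ (isSolution_powRecurrence_pow hle)

theorem prod_map_X_pow_sub_one_mul_geomSumProd (s : Multiset ℕ) (y : ℕ) :
    (s.map fun p => (X : K[X]) ^ p - 1).prod * geomSumProd K s y =
      (s.map fun p => (X : K[X]) ^ (p * (y + 1)) - 1).prod := by
  rw [geomSumProd, ← Multiset.prod_map_mul]
  refine congrArg _ (Multiset.map_congr rfl fun p _ => ?_)
  simp only [pow_mul, mul_geom_sum]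

theorem isSolution_powRecurrence_geomSumProd {n : ℕ} {s : Multiset ℕ} (hpos : ∀ p ∈ s, 0 < p)
    (hs : s.sum ≤ n) : (powRecurrence K n).IsSolution (geomSumProd K s) := by
  refine IsSolution.of_mul_left (b := (s.map fun p => (X : K[X]) ^ p - 1).prod)
    (Multiset.prod_ne_zero fun h0 => ?_) ?_
  · obtain ⟨p, hp, h⟩ := Multiset.mem_map.1 h0
    exact X_pow_sub_C_ne_zero (R := K) (hpos p hp) 1 (by rwa [map_one])
  · simpa only [prod_map_X_pow_sub_one_mul_geomSumProd] using
      isSolution_powRecurrence_prod_pow_sub_one hs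

end GeomSumProd

theorem sum_range_mul_div_two_add_one_le (n : ℕ) :
    ∑ y ∈ range (n + 1), (n * y / 2 + 1) ≤ (n ^ 3 + n + 2) / 2 := by
  rcases lt_or_ge n 2 with hn | hn
  · interval_cases n <;> decide
  rw [Nat.le_div_iff_mul_le two_pos, sum_mul]
  have hterm : ∑ y ∈ range (n + 1), (n * y / 2 + 1) * 2 ≤
      n * ∑ y ∈ range (n + 1), y + (n + 1) * 2 :=
    calc _ ≤ ∑ y ∈ range (n + 1), (n * y + 2) := sum_le_sum fun y _ => by omega
      _ = _ := by rw [sum_add_distrib, ← mul_sum, sum_const, card_range, smul_eq_mul]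
  have hgauss : n * (∑ y ∈ range (n + 1), y) * 2 = n * ((n + 1) * n) := by
    rw [mul_assoc, sum_range_id_mul_two, Nat.add_sub_cancel]
  have hcube : n * ((n + 1) * n) + 2 * n ≤ 2 * n ^ 3 := by
    have := Nat.mul_le_mul_left n (show n + 2 ≤ n * n by nlinarith)
    nlinarith
  omega

theorem partitions_dependent_general (n m : ℕ) (hm : (n ^ 3 + n + 2) / 2 < m)
    (τ : Fin m → Nat.Partition n) :
    ∃ α : Fin m → ℚ, α ≠ 0 ∧ ∀ y : ℕ,
      ∑ i : Fin m, α i •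
        (Multiset.map (fun p => ∑ j ∈ Finset.range (y + 1), (X : ℚ[X]) ^ (p * j))
          (τ i).parts).prod = 0 := by
  obtain ⟨α, hα, hinit⟩ := exists_ne_zero_forall_le_sum_smul_geomSumProd_eq_zero ℚ
    (fun i => (τ i).parts) n (fun i => (τ i).parts_sum)
    (by rw [Fintype.card_fin]; exact (sum_range_mul_div_two_add_one_le n).trans_lt hm)
  have hsol : (powRecurrence ℚ n).IsSolution fun y => ∑ i, α i • geomSumProd ℚ (τ i).parts y := by
    rw [is_sol_iff_mem_solSpace]
    convert (powRecurrence ℚ n).solSpace.sum_mem (t := univ) fun i _ =>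
      Submodule.smul_of_tower_mem _ (α i)
        (isSolution_powRecurrence_geomSumProd (fun p hp => (τ i).parts_pos hp) (τ i).parts_sum.le)
    ext1 y
    simp
  refine ⟨α, hα, fun y => congrFun (hsol.eq_zero fun y hy => hinit y ?_) y⟩
  rw [powRecurrence_order] at hy
  omega

/-- If `m > (n^3+n+2)/2` and `τ(1), …, τ(m)` are `m` distinct partitions of `n`, then there are
rationals `α_1, …, α_m`, not all zero, such that for every `y ∈ ℕ` the polynomial
`∑_i α_i · c(τ(i), y)` is the zero polynomial in `ℚ[q]`, where
`c(τ,y) = ∏_i (q^{n_i y} + q^{n_i (y-1)} + ⋯ + 1)`. -/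
theorem partitions_dependent (n m : ℕ) (hm : (n ^ 3 + n + 2) / 2 < m)
    (τ : Fin m → Nat.Partition n) (hτ : Function.Injective τ) :
    ∃ α : Fin m → ℚ, α ≠ 0 ∧ ∀ y : ℕ,
      ∑ i : Fin m, α i •
        (Multiset.map (fun p => ∑ j ∈ Finset.range (y + 1), (X : ℚ[X]) ^ (p * j))
          (τ i).parts).prod = 0 :=
  partitions_dependent_general n m hm τ
end

section
/- For a vertex-weighted graph G with weight function ω and a non-loop edge e, B^ω_{r,q}(G;x,k) = B^ω_{r,q}(G−e;x,k) + x·B^ω_{r,q}(G/e;x,k); and if e is a loop, B^ω_{r,q}(G;x,k) = (x+1)·B^ω_{r,q}(G−e;x,k). -/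
open scoped Classical

/-- A (multi)graph with vertex set a finite set of naturals, edge labels a finite set of
naturals, each edge having an unordered pair of endpoints lying in the vertex set, and a
vertex-weight function. -/
structure WGraph where
  verts : Finset ℕ
  edges : Finset ℕ
  ends : ℕ → Sym2 ℕ
  ends_mem : ∀ e ∈ edges, ∀ v ∈ ends e, v ∈ verts
  w : ℕ → ℕ

namespace WGraph

/-- Two vertices are joined in the spanning subgraph with edge set `A`. -/
def adj (G : WGraph) (A : Finset ℕ) (u v : ℕ) : Prop := ∃ i ∈ A, G.ends i = s(u, v)

/-- Reachability in the spanning subgraph with edge set `A`. -/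
def reach (G : WGraph) (A : Finset ℕ) : ℕ → ℕ → Prop := Relation.ReflTransGen (G.adj A)

/-- The set of connected components of the spanning subgraph `(V, A)`. -/
noncomputable def components (G : WGraph) (A : Finset ℕ) : Finset (Finset ℕ) :=
  G.verts.image (fun v => G.verts.filter (G.reach A v))

/-- The total weight of a set of vertices. -/
def wt (G : WGraph) (C : Finset ℕ) : ℕ := ∑ v ∈ C, G.w v

/-- All `k`-colourings: maps `V → {0, …, k-1}`, extended by `0` off the vertex set. -/
def allCol (G : WGraph) (k : ℕ) : Set (ℕ → ℕ) :=
  {s | (∀ v ∈ G.verts, s v < k) ∧ ∀ v ∉ G.verts, s v = 0}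

/-- Proper `k`-colourings: no edge is monochromatic. -/
def properCol (G : WGraph) (k : ℕ) : Set (ℕ → ℕ) :=
  {s ∈ G.allCol k | ∀ e ∈ G.edges, ∀ a b : ℕ, G.ends e = s(a, b) → s a ≠ s b}

/-- The weighted `(r,q)`-chromatic function
`M^ω_{r,q}(G;k) = ∑_{s ∈ col(G;k)} r^{∑_{v ∈ V} ω(v) q^{s(v)}}`. -/
noncomputable def Mw (G : WGraph) (r q : ℝ) (k : ℕ) : ℝ :=
  ∑ᶠ s ∈ G.properCol k, r ^ (∑ v ∈ G.verts, (G.w v : ℝ) * q ^ (s v))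

/-- The unweighted `(r,q)`-chromatic function
`M_{r,q}(G;k) = ∑_{s ∈ col(G;k)} r^{∑_{v ∈ V} q^{s(v)}}`. -/
noncomputable def M (G : WGraph) (r q : ℝ) (k : ℕ) : ℝ :=
  ∑ᶠ s ∈ G.properCol k, r ^ (∑ v ∈ G.verts, q ^ (s v))

/-- The weighted `(r,q)`-dichromatic function
`B^ω_{r,q}(G;x,k) = ∑_{A ⊆ E} x^{|A|} ∏_{C ∈ com(A)} ∑_{i=0}^{k-1} r^{ω(C) q^i}`. -/
noncomputable def Bw (G : WGraph) (r q x : ℝ) (k : ℕ) : ℝ :=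
  ∑ A ∈ G.edges.powerset, x ^ A.card *
    ∏ C ∈ G.components A, ∑ i ∈ Finset.range k, r ^ ((G.wt C : ℝ) * q ^ i)

/-- The unweighted `(r,q)`-dichromatic function
`B_{r,q}(G;x,k) = ∑_{A ⊆ E} x^{|A|} ∏_{C ∈ com(A)} ∑_{i=0}^{k-1} r^{|C| q^i}`. -/
noncomputable def B (G : WGraph) (r q x : ℝ) (k : ℕ) : ℝ :=
  ∑ A ∈ G.edges.powerset, x ^ A.card *
    ∏ C ∈ G.components A, ∑ i ∈ Finset.range k, r ^ ((C.card : ℝ) * q ^ i)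

/-- Deletion of an edge. -/
def delete (G : WGraph) (e : ℕ) : WGraph where
  verts := G.verts
  edges := G.edges.erase e
  ends := G.ends
  ends_mem := fun i hi => G.ends_mem i (Finset.mem_of_mem_erase hi)
  w := G.w

/-- Contraction of a non-loop edge `e` with ends `a`, `b`: the vertex `b` is merged into `a`,
whose new weight is `ω(a) + ω(b)`. -/
def contract (G : WGraph) (e a b : ℕ) : WGraph where
  verts := insert a (G.verts.erase b)
  edges := G.edges.erase e
  ends := fun i => (G.ends i).map (fun v => if v = b then a else v)
  ends_mem := by
    intro i hi v hv
    rcases Sym2.mem_map.1 hv with ⟨u, hu, rfl⟩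
    by_cases h : u = b
    · simp [h]
    · simp only [if_neg h]
      exact Finset.mem_insert_of_mem
        (Finset.mem_erase.2 ⟨h, G.ends_mem i (Finset.mem_of_mem_erase hi) u hu⟩)
  w := fun v => if v = a then G.w a + G.w b else G.w v

end WGraph

open WGraph

/-! Split the sum over `A ⊆ E` according to whether `e ∈ A`; the subsets avoiding `e` give
`G − e`. If `e` is a loop, its ends are already connected, so `A ∪ {e}` and `A` have the same
components. Otherwise `a` and `b` lie in one component of `(V, A ∪ {e})`, so erasing `b` maps
these components bijectively onto those of `(V(G/e), A)`, preserving total weight. Only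
multiplicativity over components is used, so the identity holds for any function of the
component weight in place of `∑_{i<k} r^{n q^i}`. -/

namespace WGraph

variable {G : WGraph} {A : Finset ℕ} {e a b : ℕ}

instance (G : WGraph) (A : Finset ℕ) : Std.Symm (G.adj A) :=
  ⟨fun _ _ ⟨i, hi, h⟩ => ⟨i, hi, h.trans Sym2.eq_swap⟩⟩

lemma reach_symm {u v : ℕ} (h : G.reach A u v) : G.reach A v u :=
  Relation.ReflTransGen.stdSymm.symm _ _ h

lemma reach_of_ends_eq (hends : G.ends e = s(a, b)) (he : e ∈ A) : G.reach A a b :=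
  .single ⟨e, he, hends⟩

lemma filter_reach_eq {u v : ℕ} (h : G.reach A u v) :
    G.verts.filter (G.reach A u) = G.verts.filter (G.reach A v) := by
  ext w
  simp only [Finset.mem_filter]
  exact and_congr_right fun _ => ⟨(reach_symm h).trans, h.trans⟩

lemma mem_components_iff_of_reach {C : Finset ℕ} {u v : ℕ} (hC : C ∈ G.components A)
    (hu : u ∈ G.verts) (hv : v ∈ G.verts) (huv : G.reach A u v) : u ∈ C ↔ v ∈ C := by
  obtain ⟨w, -, rfl⟩ := Finset.mem_image.1 hC
  simp only [Finset.mem_filter, hu, hv, true_and]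
  exact ⟨(·.trans huv), (·.trans (reach_symm huv))⟩

lemma eq_of_mem_components {C D : Finset ℕ} {u : ℕ} (hC : C ∈ G.components A)
    (hD : D ∈ G.components A) (huC : u ∈ C) (huD : u ∈ D) : C = D := by
  obtain ⟨v, -, rfl⟩ := Finset.mem_image.1 hC
  obtain ⟨w, -, rfl⟩ := Finset.mem_image.1 hD
  exact filter_reach_eq ((Finset.mem_filter.1 huC).2.trans
    (reach_symm (Finset.mem_filter.1 huD).2))

lemma reach_insert_eq (hends : G.ends e = s(a, b)) (hab : G.reach A a b) :
    G.reach (insert e A) = G.reach A := by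
  refine le_antisymm (Relation.reflTransGen_closed ?_)
    (Relation.ReflTransGen.mono fun u v ⟨i, hi, h⟩ => ⟨i, Finset.mem_insert_of_mem hi, h⟩)
  rintro u v ⟨i, hi, h⟩
  rcases Finset.mem_insert.1 hi with rfl | hi
  · rcases Sym2.eq_iff.1 (h.symm.trans hends) with ⟨rfl, rfl⟩ | ⟨rfl, rfl⟩
    · exact hab
    · exact reach_symm hab
  · exact .single ⟨i, hi, h⟩

lemma components_insert_eq (hends : G.ends e = s(a, b)) (hab : G.reach A a b) :
    G.components (insert e A) = G.components A := by
  rw [components, components, reach_insert_eq hends hab]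

def collapse (a b v : ℕ) : ℕ := if v = b then a else v

lemma reach_collapse (hends : G.ends e = s(a, b)) (v : ℕ) :
    G.reach (insert e A) v (collapse a b v) := by
  unfold collapse
  split_ifs with hv
  · exact hv ▸ reach_symm (reach_of_ends_eq hends (Finset.mem_insert_self e A))
  · exact .refl

lemma contract_ends (G : WGraph) (e a b i : ℕ) :
    (G.contract e a b).ends i = (G.ends i).map (collapse a b) := rfl

lemma reach_of_reach_contract (hends : G.ends e = s(a, b)) {u v : ℕ}
    (h : (G.contract e a b).reach A u v) : G.reach (insert e A) u v := by
  refine Relation.reflTransGen_closed ?_ u v h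
  rintro w z ⟨i, hi, hwz⟩
  rcases Sym2.mk_surjective (G.ends i) with ⟨⟨p, p'⟩, hpp⟩
  have hcol : s(collapse a b p, collapse a b p') = s(w, z) := by
    rw [← Sym2.map_mk, ← hwz, contract_ends]
    exact congrArg _ hpp
  have hstep : G.reach (insert e A) (collapse a b p) (collapse a b p') :=
    (reach_symm (reach_collapse hends p)).trans <|
      (Relation.ReflTransGen.single ⟨i, Finset.mem_insert_of_mem hi, hpp.symm⟩).trans
        (reach_collapse hends p')
  rcases Sym2.eq_iff.1 hcol with ⟨rfl, rfl⟩ | ⟨rfl, rfl⟩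
  · exact hstep
  · exact reach_symm hstep

lemma reach_contract_collapse (hends : G.ends e = s(a, b)) {u v : ℕ}
    (h : G.reach (insert e A) u v) :
    (G.contract e a b).reach A (collapse a b u) (collapse a b v) := by
  refine Relation.ReflTransGen.lift' (collapse a b) ?_ u v h
  rintro w z ⟨i, hi, hwz⟩
  rcases Finset.mem_insert.1 hi with rfl | hi
  · have hcol : collapse a b w = collapse a b z := by
      rcases Sym2.eq_iff.1 (hwz.symm.trans hends) with ⟨rfl, rfl⟩ | ⟨rfl, rfl⟩ <;>
        simp [collapse]
    show (G.contract _ a b).reach A (collapse a b w) (collapse a b z)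
    rw [hcol]
    exact .refl
  · exact .single ⟨i, hi, by rw [contract_ends, hwz, Sym2.map_mk]⟩

lemma reach_contract_iff (hends : G.ends e = s(a, b)) {u v : ℕ} (hu : u ≠ b) (hv : v ≠ b) :
    (G.contract e a b).reach A u v ↔ G.reach (insert e A) u v :=
  ⟨reach_of_reach_contract hends, fun h => by
    simpa only [collapse, if_neg hu, if_neg hv] using reach_contract_collapse hends h⟩

lemma left_mem_verts (he : e ∈ G.edges) (hends : G.ends e = s(a, b)) : a ∈ G.verts :=
  G.ends_mem e he a (hends ▸ Sym2.mem_mk_left a b)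

lemma right_mem_verts (he : e ∈ G.edges) (hends : G.ends e = s(a, b)) : b ∈ G.verts :=
  G.ends_mem e he b (hends ▸ Sym2.mem_mk_right a b)

lemma contract_verts_eq (ha : a ∈ G.verts) (hab : a ≠ b) :
    (G.contract e a b).verts = G.verts.erase b :=
  Finset.insert_eq_of_mem (Finset.mem_erase.2 ⟨hab, ha⟩)

lemma components_contract (he : e ∈ G.edges) (hab : a ≠ b) (hends : G.ends e = s(a, b)) :
    (G.contract e a b).components A = (G.components (insert e A)).image (fun C => C.erase b) := by
  have ha := left_mem_verts he hends
  have hcomp : ∀ v ∈ G.verts.erase b,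
      (G.verts.erase b).filter ((G.contract e a b).reach A v) =
        (G.verts.filter (G.reach (insert e A) v)).erase b := by
    intro v hv
    rw [← Finset.filter_erase]
    exact Finset.filter_congr fun u hu =>
      reach_contract_iff hends (Finset.ne_of_mem_erase hv) (Finset.ne_of_mem_erase hu)
  have himage : (G.verts.erase b).image (fun v => G.verts.filter (G.reach (insert e A) v)) =
      G.verts.image (fun v => G.verts.filter (G.reach (insert e A) v)) := by
    refine (Finset.image_subset_image (Finset.erase_subset b _)).antisymm fun C hC => ?_
    obtain ⟨v, hv, rfl⟩ := Finset.mem_image.1 hC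
    by_cases hvb : v = b
    · subst hvb
      exact Finset.mem_image.2 ⟨a, Finset.mem_erase.2 ⟨hab, ha⟩,
        filter_reach_eq (reach_of_ends_eq hends (Finset.mem_insert_self e A))⟩
    · exact Finset.mem_image_of_mem _ (Finset.mem_erase.2 ⟨hvb, hv⟩)
  rw [components, components, contract_verts_eq ha hab, Finset.image_congr hcomp,
    ← himage, Finset.image_image]
  rfl

lemma erase_injOn_components (hab : a ≠ b) (ha : a ∈ G.verts) (hb : b ∈ G.verts)
    (hreach : G.reach A a b) : Set.InjOn (fun C : Finset ℕ => C.erase b) (G.components A) := by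
  intro C hC D hD hCD
  simp only at hCD
  have hne : ∃ u ∈ C, u ≠ b := by
    obtain ⟨v, hv, rfl⟩ := Finset.mem_image.1 hC
    have hvC : v ∈ G.verts.filter (G.reach A v) := Finset.mem_filter.2 ⟨hv, .refl⟩
    by_cases hvb : v = b
    · exact ⟨a, (mem_components_iff_of_reach hC ha hb hreach).2 (hvb ▸ hvC), hab⟩
    · exact ⟨v, hvC, hvb⟩
  obtain ⟨u, huC, hub⟩ := hne
  have huD : u ∈ D := Finset.mem_of_mem_erase (hCD ▸ Finset.mem_erase.2 ⟨hub, huC⟩)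
  exact eq_of_mem_components hC hD huC huD

lemma wt_contract_erase (hab : a ≠ b) {S : Finset ℕ} (hS : a ∈ S ↔ b ∈ S) :
    (G.contract e a b).wt (S.erase b) = G.wt S := by
  have hw : ∀ v ≠ a, (G.contract e a b).w v = G.w v := fun v hv => if_neg hv
  by_cases hb : b ∈ S
  · have ha : a ∈ S.erase b := Finset.mem_erase.2 ⟨hab, hS.2 hb⟩
    have hrest : ∑ v ∈ (S.erase b).erase a, (G.contract e a b).w v =
        ∑ v ∈ (S.erase b).erase a, G.w v :=
      Finset.sum_congr rfl fun v hv => hw v (Finset.ne_of_mem_erase hv)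
    rw [wt, wt, ← Finset.add_sum_erase _ _ ha, hrest, ← Finset.add_sum_erase _ _ hb,
      ← Finset.add_sum_erase _ _ ha, show (G.contract e a b).w a = G.w a + G.w b from if_pos rfl]
    ring
  · rw [Finset.erase_eq_of_notMem hb, wt, wt]
    exact Finset.sum_congr rfl fun v hv => hw v (by rintro rfl; exact hb (hS.1 hv))

lemma prod_components_contract {M : Type*} [CommMonoid M] (f : ℕ → M) (he : e ∈ G.edges)
    (hab : a ≠ b) (hends : G.ends e = s(a, b)) :
    ∏ C ∈ (G.contract e a b).components A, f ((G.contract e a b).wt C) =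
      ∏ C ∈ G.components (insert e A), f (G.wt C) := by
  have ha := left_mem_verts he hends
  have hb := right_mem_verts he hends
  have hreach := reach_of_ends_eq hends (Finset.mem_insert_self e A)
  rw [components_contract he hab hends, Finset.prod_image (erase_injOn_components hab ha hb hreach)]
  exact Finset.prod_congr rfl fun C hC =>
    congrArg f (wt_contract_erase hab (mem_components_iff_of_reach hC ha hb hreach))

noncomputable def subgraphExpansion {R : Type*} [CommSemiring R] (G : WGraph) (x : R)
    (f : ℕ → R) : R :=
  ∑ A ∈ G.edges.powerset, x ^ A.card * ∏ C ∈ G.components A, f (G.wt C)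

section SubgraphExpansion

variable {R : Type*} [CommSemiring R] (x : R) (f : ℕ → R)

lemma subgraphExpansion_eq_delete_add (he : e ∈ G.edges) :
    G.subgraphExpansion x f = (G.delete e).subgraphExpansion x f +
      x * ∑ A ∈ (G.edges.erase e).powerset,
        x ^ A.card * ∏ C ∈ G.components (insert e A), f (G.wt C) := by
  have hsplit := Finset.sum_powerset_insert (Finset.notMem_erase e G.edges)
    fun A => x ^ A.card * ∏ C ∈ G.components A, f (G.wt C)
  rw [Finset.insert_erase he] at hsplit
  rw [subgraphExpansion, hsplit, Finset.mul_sum]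
  congr 1
  refine Finset.sum_congr rfl fun A hA => ?_
  have heA : e ∉ A := fun h => Finset.notMem_erase e G.edges (Finset.mem_powerset.1 hA h)
  rw [Finset.card_insert_of_notMem heA, pow_succ]
  ring

lemma subgraphExpansion_delete_contract (he : e ∈ G.edges) (hab : a ≠ b)
    (hends : G.ends e = s(a, b)) :
    G.subgraphExpansion x f =
      (G.delete e).subgraphExpansion x f + x * (G.contract e a b).subgraphExpansion x f := by
  rw [subgraphExpansion_eq_delete_add x f he]
  congr 2
  exact Finset.sum_congr rfl fun A _ => by rw [prod_components_contract f he hab hends]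

lemma subgraphExpansion_loop (he : e ∈ G.edges) (hends : G.ends e = s(a, a)) :
    G.subgraphExpansion x f = (x + 1) * (G.delete e).subgraphExpansion x f := by
  rw [subgraphExpansion_eq_delete_add x f he]
  simp_rw [components_insert_eq hends .refl]
  change _ + x * (G.delete e).subgraphExpansion x f = _
  ring

end SubgraphExpansion

lemma Bw_eq_subgraphExpansion (G : WGraph) (r q x : ℝ) (k : ℕ) :
    G.Bw r q x k =
      G.subgraphExpansion x fun n => ∑ i ∈ Finset.range k, r ^ ((n : ℝ) * q ^ i) := rfl

end WGraph

theorem Bw_deletion_contraction_general (G : WGraph) (r q x : ℝ) (k : ℕ) :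
    (∀ e a b : ℕ, e ∈ G.edges → a ≠ b → G.ends e = s(a, b) →
      G.Bw r q x k = (G.delete e).Bw r q x k + x * (G.contract e a b).Bw r q x k) ∧
    (∀ e a : ℕ, e ∈ G.edges → G.ends e = s(a, a) →
      G.Bw r q x k = (x + 1) * (G.delete e).Bw r q x k) := by
  simp only [Bw_eq_subgraphExpansion]
  exact ⟨fun _ _ _ he hab hends => subgraphExpansion_delete_contract x _ he hab hends,
    fun _ _ he hends => subgraphExpansion_loop x _ he hends⟩

/-- Deletion–contraction for the weighted `(r,q)`-dichromatic function: for a non-loop edge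
`e = ab`, `B^ω_{r,q}(G;x,k) = B^ω_{r,q}(G−e;x,k) + x·B^ω_{r,q}(G/e;x,k)`, and for a loop
`e` (at a vertex `a`), `B^ω_{r,q}(G;x,k) = (x+1)·B^ω_{r,q}(G−e;x,k)`. -/
theorem Bw_deletion_contraction (G : WGraph) (r q x : ℝ) (hr : 0 < r) (k : ℕ) :
    (∀ e a b : ℕ, e ∈ G.edges → a ≠ b → G.ends e = s(a, b) →
      G.Bw r q x k = (G.delete e).Bw r q x k + x * (G.contract e a b).Bw r q x k) ∧
    (∀ e a : ℕ, e ∈ G.edges → G.ends e = s(a, a) →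
      G.Bw r q x k = (x + 1) * (G.delete e).Bw r q x k) :=
  Bw_deletion_contraction_general G r q x k
end
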